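/- arXiv:1304.3861 — 2 statements merged into one kernel-verified Lean document; each statement's English description precedes it below -/
import Mathlib

section
/- Let B₀, B₁ be symmetric 3×3 complex matrices, not both zero, such that det(λB₀ + μB₁) = 0 for all λ, μ ∈ ℂ. Then either there exists a nonzero vector S ∈ ℂ³ with B₀S = B₁S = 0, or there exists a 2-dimensional subspace L ⊂ ℂ³ such that vᵀ(λB₀ + μB₁)v = 0 for all v ∈ L and all λ, μ. -/
set_option maxRecDepth 4000

open Matrix Polynomial

private lemma symm_dot {A : Matrix (Fin 3) (Fin 3) ℂ} (h : A.IsSymm)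
    (u w : Fin 3 → ℂ) : u ⬝ᵥ A.mulVec w = A.mulVec u ⬝ᵥ w := by
  rw [dotProduct_mulVec, ← mulVec_transpose, h.eq]

private lemma key_lemma (B₀ B₁ : Matrix (Fin 3) (Fin 3) ℂ)
    (h₀ : B₀.IsSymm) (h₁ : B₁.IsSymm)
    (x y : Fin 3 → ℂ) (hx0 : x ≠ 0) (hy0 : y ≠ 0)
    (hx : B₀.mulVec x = 0) (hy : B₁.mulVec y = 0)
    (hq1 : x ⬝ᵥ B₁.mulVec x = 0) (hq2 : y ⬝ᵥ B₀.mulVec y = 0) :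
    (∃ S : Fin 3 → ℂ, S ≠ 0 ∧ B₀.mulVec S = 0 ∧ B₁.mulVec S = 0) ∨
    (∃ L : Submodule ℂ (Fin 3 → ℂ), Module.finrank ℂ L = 2 ∧
      ∀ v ∈ L, ∀ l m : ℂ, v ⬝ᵥ (l • B₀ + m • B₁).mulVec v = 0) := by
  by_cases hli : LinearIndependent ℂ ![x, y]
  · right
    refine ⟨Submodule.span ℂ (Set.range ![x, y]), ?_, ?_⟩
    · rw [finrank_span_eq_card hli, Fintype.card_fin]
    · intro v hv l m
      have hrange : Set.range ![x, y] = {x, y} := by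
        ext u
        simp [Matrix.range_cons, Matrix.range_empty]; tauto
      rw [hrange] at hv
      obtain ⟨a, b, rfl⟩ := Submodule.mem_span_pair.mp hv
      have e1 : x ⬝ᵥ B₀.mulVec y = 0 := by
        rw [symm_dot h₀, hx, zero_dotProduct]
      have e2 : y ⬝ᵥ B₀.mulVec x = 0 := by rw [hx, dotProduct_zero]
      have e3 : x ⬝ᵥ B₀.mulVec x = 0 := by rw [hx, dotProduct_zero]
      have e4 : x ⬝ᵥ B₁.mulVec y = 0 := by rw [hy, dotProduct_zero]
      have e5 : y ⬝ᵥ B₁.mulVec x = 0 := by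
        rw [symm_dot h₁, hy, zero_dotProduct]
      have e6 : y ⬝ᵥ B₁.mulVec y = 0 := by rw [hy, dotProduct_zero]
      simp only [add_mulVec, smul_mulVec, mulVec_add, mulVec_smul,
        dotProduct_add, add_dotProduct, dotProduct_smul, smul_dotProduct,
        smul_eq_mul]
      rw [e1, e2, e3, e4, e5, e6, hq1, hq2]
      ring
  · left
    rw [linearIndependent_fin2] at hli
    push_neg at hli
    simp only [Matrix.cons_val_one, Matrix.head_cons, Matrix.cons_val_zero] at hli
    obtain ⟨a, ha⟩ := hli hy0
    have ha0 : a ≠ 0 := by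
      rintro rfl
      rw [zero_smul] at ha
      exact hx0 ha.symm
    refine ⟨y, hy0, ?_, hy⟩
    have : B₀.mulVec (a • y) = 0 := by rw [ha, hx]
    rw [mulVec_smul] at this
    simpa [ha0] using this

theorem pencil_in_determinantal (B₀ B₁ : Matrix (Fin 3) (Fin 3) ℂ)
    (h₀ : B₀.IsSymm) (h₁ : B₁.IsSymm) (hne : ¬ (B₀ = 0 ∧ B₁ = 0))
    (hdet : ∀ l m : ℂ, (l • B₀ + m • B₁).det = 0) :
    (∃ S : Fin 3 → ℂ, S ≠ 0 ∧ B₀.mulVec S = 0 ∧ B₁.mulVec S = 0) ∨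
    (∃ L : Submodule ℂ (Fin 3 → ℂ), Module.finrank ℂ L = 2 ∧
      ∀ v ∈ L, ∀ l m : ℂ, v ⬝ᵥ (l • B₀ + m • B₁).mulVec v = 0) := by
  classical
  -- the pencil matrix over ℂ[X]
  set P : Matrix (Fin 3) (Fin 3) ℂ[X] :=
    B₀.map Polynomial.C + (X : ℂ[X]) • B₁.map Polynomial.C with hP
  have hPdet : P.det = 0 := by
    apply Polynomial.funext
    intro t
    have hmap : (Polynomial.evalRingHom t).mapMatrix P = (1:ℂ) • B₀ + t • B₁ := by
      ext i j
      simp only [hP, RingHom.mapMatrix_apply, Matrix.map_apply, Matrix.add_apply,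
        Matrix.smul_apply, smul_eq_mul, Polynomial.eval_add, Polynomial.eval_mul,
        Polynomial.eval_C, Polynomial.eval_X, Polynomial.coe_evalRingHom, one_smul,
        Matrix.map_apply]
    have h := RingHom.map_det (Polynomial.evalRingHom t) P
    rw [hmap, hdet 1 t] at h
    simpa using h
  obtain ⟨v, hv0, hvker⟩ := (Matrix.exists_mulVec_eq_zero_iff).mpr hPdet
  -- coefficient vectors
  set w : ℕ → (Fin 3 → ℂ) := fun n i => (v i).coeff n with hw
  have hcoeff : ∀ (k : ℕ) (i : Fin 3),
      ((P.mulVec v) i).coeff k =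
        B₀.mulVec (w k) i + (if k = 0 then 0 else B₁.mulVec (w (k - 1)) i) := by
    intro k i
    simp only [hP, mulVec, dotProduct, Matrix.add_apply, Matrix.smul_apply,
      Matrix.map_apply, smul_eq_mul, add_mul, mul_assoc]
    rw [Polynomial.finset_sum_coeff]
    simp only [Polynomial.coeff_add, Polynomial.coeff_C_mul, Finset.sum_add_distrib, hw]
    cases k with
    | zero => simp [Polynomial.coeff_X_mul_zero]
    | succ n => simp [Polynomial.coeff_X_mul]
  have hrel0 : B₀.mulVec (w 0) = 0 := by
    funext i
    have := congrArg (fun p => Polynomial.coeff p 0) (congrFun hvker i)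
    simpa [hcoeff 0 i] using this
  have hreln : ∀ n : ℕ, B₀.mulVec (w (n + 1)) + B₁.mulVec (w n) = 0 := by
    intro n
    funext i
    have := congrArg (fun p => Polynomial.coeff p (n + 1)) (congrFun hvker i)
    simpa [hcoeff (n + 1) i] using this
  -- existence of a nonzero coefficient vector
  have hex : ∃ n, w n ≠ 0 := by
    by_contra hcon
    push_neg at hcon
    apply hv0
    funext i
    apply Polynomial.ext
    intro n
    have := congrFun (hcon n) i
    simpa [hw] using this
  -- bound on nonzero coefficients
  set N : ℕ := Finset.univ.sup fun i => (v i).natDegree with hN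
  have hbound : ∀ n, N < n → w n = 0 := by
    intro n hn
    funext i
    have hle : (v i).natDegree ≤ N := hN ▸ Finset.le_sup (f := fun i => (v i).natDegree) (Finset.mem_univ i)
    simp only [hw, Pi.zero_apply]
    exact Polynomial.coeff_eq_zero_of_natDegree_lt (lt_of_le_of_lt hle hn)
  set e : ℕ := Nat.find hex with he
  have hwe : w e ≠ 0 := Nat.find_spec hex
  have hemin : ∀ k, k < e → w k = 0 := by
    intro k hk
    by_contra hcon
    exact Nat.find_min hex hk hcon
  set d : ℕ := Nat.findGreatest (fun n => w n ≠ 0) N with hd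
  have heN : e ≤ N := by
    by_contra hcon
    push_neg at hcon
    exact hwe (hbound e hcon)
  have hed : e ≤ d := by rw [hd]; exact Nat.le_findGreatest (P := fun n => w n ≠ 0) heN hwe
  have hwd : w d ≠ 0 := by rw [hd]; exact Nat.findGreatest_spec (P := fun n => w n ≠ 0) heN hwe
  have hdsucc : w (d + 1) = 0 := by
    by_cases hc : d + 1 ≤ N
    · by_contra hcon
      rw [hd] at hcon hc
      exact Nat.findGreatest_is_greatest (P := fun n => w n ≠ 0) (Nat.lt_succ_self _) hc hcon
    · exact hbound _ (by omega)
  have hB1d : B₁.mulVec (w d) = 0 := by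
    have := hreln d
    rw [hdsucc, mulVec_zero, zero_add] at this
    exact this
  have hB0e : B₀.mulVec (w e) = 0 := by
    rcases Nat.eq_zero_or_pos e with h0 | hpos
    · rw [h0]; exact hrel0
    · obtain ⟨k, hk⟩ : ∃ k, e = k + 1 := ⟨e - 1, by omega⟩
      have hzk : w k = 0 := hemin k (by omega)
      have h2 := hreln k
      rw [hzk, mulVec_zero, add_zero, ← hk] at h2
      exact h2
  rcases eq_or_lt_of_le hed with heq | hlt
  · exact Or.inl ⟨w d, hwd, heq ▸ hB0e, hB1d⟩
  · -- e < d : apply the key lemma with x = w e, y = w d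
    have hq1 : w e ⬝ᵥ B₁.mulVec (w e) = 0 := by
      have h1 : B₁.mulVec (w e) = -(B₀.mulVec (w (e + 1))) := by
        have := hreln e
        linear_combination (norm := module) this
      rw [h1, dotProduct_neg, symm_dot h₀, hB0e, zero_dotProduct, neg_zero]
    obtain ⟨d', hd'⟩ : ∃ d', d = d' + 1 := ⟨d - 1, by omega⟩
    have hq2 : w d ⬝ᵥ B₀.mulVec (w d) = 0 := by
      have h1 : B₀.mulVec (w d) = -(B₁.mulVec (w d')) := by
        have h2 := hreln d'
        rw [← hd'] at h2
        linear_combination (norm := module) h2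
      rw [h1, dotProduct_neg, symm_dot h₁, hB1d, zero_dotProduct, neg_zero]
    exact key_lemma B₀ B₁ h₀ h₁ (w e) (w d) hwe hwd hB0e hB1d hq1 hq2
end

section
/- A pencil of reducible plane conics (i.e., a pencil λQ₀ + μQ₁ of quadratic forms on ℂ³ all of which are degenerate) either has a base point S that is a singular point of every member (common kernel vector), or all members share a common linear factor. -/
open Matrix Polynomial

lemma aux_dep {a b : Fin 3 → ℂ} (ha : a ≠ 0) (h : crossProduct a b = 0) : ∃ c : ℂ, b = c • a := by
  have hni : ¬ LinearIndependent ℂ ![a, b] := fun hli =>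
    (crossProduct_ne_zero_iff_linearIndependent.mpr hli) h
  rw [LinearIndependent.pair_iff' ha, not_forall] at hni
  obtain ⟨c, hc⟩ := hni
  rw [not_ne_iff] at hc
  exact ⟨c, hc.symm⟩



lemma aux_symm {Q : Matrix (Fin 3) (Fin 3) ℂ} (hQ : Qᵀ = Q) (a b : Fin 3 → ℂ) :
    a ⬝ᵥ Q *ᵥ b = b ⬝ᵥ Q *ᵥ a := by
  rw [Matrix.dotProduct_mulVec, ← Matrix.mulVec_transpose, hQ, dotProduct_comm]

lemma aux_vmv (u v x : Fin 3 → ℂ) : (vecMulVec u v) *ᵥ x = (v ⬝ᵥ x) • u := by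
  funext a
  simp only [Matrix.mulVec, Matrix.vecMulVec_apply, dotProduct, Pi.smul_apply,
    smul_eq_mul, Finset.sum_mul]
  refine Finset.sum_congr rfl fun i _ => by ring

lemma aux_factor (Q : Matrix (Fin 3) (Fin 3) ℂ) (hQ : Qᵀ = Q) (e₁ e₂ : Fin 3 → ℂ)
    (hc : crossProduct e₁ e₂ ≠ 0)
    (h11 : e₁ ⬝ᵥ Q *ᵥ e₁ = 0) (h12 : e₁ ⬝ᵥ Q *ᵥ e₂ = 0) (h22 : e₂ ⬝ᵥ Q *ᵥ e₂ = 0) :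
    ∃ ℓ' : Fin 3 → ℂ, ∀ v, v ⬝ᵥ Q *ᵥ v = ((crossProduct e₁ e₂) ⬝ᵥ v) * (ℓ' ⬝ᵥ v) := by
  set ℓ : Fin 3 → ℂ := crossProduct e₁ e₂ with hℓ
  obtain ⟨i₀, hi₀⟩ : ∃ i, ℓ i ≠ 0 := Function.ne_iff.mp hc
  set e₃ : Fin 3 → ℂ := (ℓ i₀)⁻¹ • (Pi.single i₀ 1 : Fin 3 → ℂ) with he₃
  have hle3 : ℓ ⬝ᵥ e₃ = 1 := by
    rw [he₃, dotProduct_smul, dotProduct_single]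
    simp [inv_mul_cancel₀ hi₀, hi₀]
  have hle1 : ℓ ⬝ᵥ e₁ = 0 := by rw [dotProduct_comm, hℓ, dot_self_cross]
  have hle2 : ℓ ⬝ᵥ e₂ = 0 := by rw [dotProduct_comm, hℓ, dot_cross_self]
  set c : ℂ := e₃ ⬝ᵥ Q *ᵥ e₃ with hcc
  set ℓ' : Fin 3 → ℂ := (2:ℂ) • (Q *ᵥ e₃) - c • ℓ with hℓ'
  have hl'dot : ∀ x : Fin 3 → ℂ, ℓ' ⬝ᵥ x = 2 * (x ⬝ᵥ Q *ᵥ e₃) - c * (ℓ ⬝ᵥ x) := by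
    intro x
    rw [hℓ', sub_dotProduct, smul_dotProduct, smul_dotProduct,
      dotProduct_comm (Q *ᵥ e₃) x]
    simp [smul_eq_mul]
  have hl'1 : ℓ' ⬝ᵥ e₁ = 2 * (e₁ ⬝ᵥ Q *ᵥ e₃) := by rw [hl'dot, hle1]; ring
  have hl'2 : ℓ' ⬝ᵥ e₂ = 2 * (e₂ ⬝ᵥ Q *ᵥ e₃) := by rw [hl'dot, hle2]; ring
  have hl'3 : ℓ' ⬝ᵥ e₃ = c := by rw [hl'dot, hle3, ← hcc]; ring
  set D : Matrix (Fin 3) (Fin 3) ℂ :=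
    Q - (2:ℂ)⁻¹ • (vecMulVec ℓ ℓ' + vecMulVec ℓ' ℓ) with hD
  have hDdot : ∀ a b : Fin 3 → ℂ,
      a ⬝ᵥ D *ᵥ b = a ⬝ᵥ Q *ᵥ b - 2⁻¹ * ((ℓ ⬝ᵥ a) * (ℓ' ⬝ᵥ b) + (ℓ' ⬝ᵥ a) * (ℓ ⬝ᵥ b)) := by
    intro a b
    rw [hD, Matrix.sub_mulVec, dotProduct_sub, Matrix.smul_mulVec,
      dotProduct_smul, Matrix.add_mulVec, dotProduct_add, aux_vmv, aux_vmv,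
      dotProduct_smul, dotProduct_smul]
    rw [dotProduct_comm a ℓ, dotProduct_comm a ℓ']
    simp only [smul_eq_mul]; ring
  have k33 : e₃ ⬝ᵥ D *ᵥ e₃ = 0 := by rw [hDdot, hl'3, hle3, ← hcc]; ring
  have k31 : e₃ ⬝ᵥ D *ᵥ e₁ = 0 := by
    rw [hDdot, hl'1, hle1, hle3, aux_symm hQ e₃ e₁]; ring
  have k32 : e₃ ⬝ᵥ D *ᵥ e₂ = 0 := by
    rw [hDdot, hl'2, hle2, hle3, aux_symm hQ e₃ e₂]; ring
  have k13 : e₁ ⬝ᵥ D *ᵥ e₃ = 0 := by rw [hDdot, hl'3, hle1, hle3, hl'1]; ring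
  have k23 : e₂ ⬝ᵥ D *ᵥ e₃ = 0 := by rw [hDdot, hl'3, hle2, hle3, hl'2]; ring
  have k11 : e₁ ⬝ᵥ D *ᵥ e₁ = 0 := by rw [hDdot, hle1, h11]; ring
  have k12 : e₁ ⬝ᵥ D *ᵥ e₂ = 0 := by rw [hDdot, hle1, hle2, h12]; ring
  have k21 : e₂ ⬝ᵥ D *ᵥ e₁ = 0 := by
    rw [hDdot, hle1, hle2, aux_symm hQ e₂ e₁, h12]; ring
  have k22 : e₂ ⬝ᵥ D *ᵥ e₂ = 0 := by rw [hDdot, hle2, h22]; ring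
  set P : Matrix (Fin 3) (Fin 3) ℂ := Matrix.of ![e₃, e₁, e₂] with hP
  have hPdet : P.det = 1 := by
    rw [show P = ![e₃, e₁, e₂] from rfl, ← triple_product_eq_det, ← hℓ,
      dotProduct_comm, hle3]
  have hPDP : P * D * Pᵀ = 0 := by
    have hent : ∀ i j, (P * D * Pᵀ) i j = (P i) ⬝ᵥ D *ᵥ (P j) := by
      intro i j
      simp only [Matrix.mul_apply, Matrix.transpose_apply, Matrix.mulVec, dotProduct,
        Finset.sum_mul, Finset.mul_sum]
      rw [Finset.sum_comm]
      refine Finset.sum_congr rfl fun a _ => Finset.sum_congr rfl fun b _ => by ring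
    ext i j
    rw [hent i j, Matrix.zero_apply]
    fin_cases i <;> fin_cases j <;>
      first
        | exact k33 | exact k31 | exact k32 | exact k13 | exact k11 | exact k12
        | exact k23 | exact k21 | exact k22
  have hPu : IsUnit P.det := by rw [hPdet]; exact isUnit_one
  have hPtu : IsUnit Pᵀ.det := by rw [Matrix.det_transpose, hPdet]; exact isUnit_one
  have hD0 : D = 0 := by
    have h1 : P⁻¹ * (P * D * Pᵀ) * Pᵀ⁻¹ = D := by
      rw [Matrix.mul_assoc P D Pᵀ, ← Matrix.mul_assoc P⁻¹ P _, Matrix.nonsing_inv_mul P hPu,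
        Matrix.one_mul, Matrix.mul_assoc D Pᵀ Pᵀ⁻¹, Matrix.mul_nonsing_inv Pᵀ hPtu,
        Matrix.mul_one]
    rw [← h1, hPDP, Matrix.mul_zero, Matrix.zero_mul]
  refine ⟨ℓ', fun v => ?_⟩
  have hvv := hDdot v v
  rw [hD0] at hvv
  simp only [Matrix.zero_mulVec, dotProduct_zero] at hvv
  linear_combination -hvv

theorem pencil_reducible_conics (Q₀ Q₁ : Matrix (Fin 3) (Fin 3) ℂ)
    (h₀ : Q₀.IsSymm) (h₁ : Q₁.IsSymm) (hne : ¬ (Q₀ = 0 ∧ Q₁ = 0))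
    (hdet : ∀ l m : ℂ, (l • Q₀ + m • Q₁).det = 0) :
    (∃ S : Fin 3 → ℂ, S ≠ 0 ∧ Q₀.mulVec S = 0 ∧ Q₁.mulVec S = 0) ∨
    (∃ ℓ : Fin 3 → ℂ, ℓ ≠ 0 ∧ ∀ l m : ℂ, ∃ ℓ' : Fin 3 → ℂ,
      ∀ v : Fin 3 → ℂ, v ⬝ᵥ (l • Q₀ + m • Q₁).mulVec v = (ℓ ⬝ᵥ v) * (ℓ' ⬝ᵥ v)) := by
  classical
  have hQ0T : Q₀ᵀ = Q₀ := h₀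
  have hQ1T : Q₁ᵀ = Q₁ := h₁
  set M : Matrix (Fin 3) (Fin 3) ℂ[X] := Q₀.map C + (X : ℂ[X]) • Q₁.map C with hM
  have hMij : ∀ i j, M i j = C (Q₀ i j) + X * C (Q₁ i j) := by
    intro i j
    simp [hM, Matrix.add_apply, Matrix.smul_apply, Matrix.map_apply, smul_eq_mul]
  have hdetM : M.det = 0 := by
    apply Polynomial.funext
    intro t
    rw [Polynomial.eval_zero]
    have h1 : eval t M.det = ((Polynomial.evalRingHom t).mapMatrix M).det :=
      RingHom.map_det (Polynomial.evalRingHom t) M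
    rw [h1]
    have h2 : (Polynomial.evalRingHom t).mapMatrix M = (1:ℂ) • Q₀ + t • Q₁ := by
      ext i j
      simp only [RingHom.mapMatrix_apply, Matrix.map_apply, hMij, Polynomial.coe_evalRingHom,
        Polynomial.eval_add, Polynomial.eval_mul, Polynomial.eval_C, Polynomial.eval_X,
        Matrix.add_apply, Matrix.smul_apply, smul_eq_mul]
      ring
    rw [h2]
    exact hdet 1 t
  obtain ⟨w, hw0, hww⟩ := Matrix.exists_mulVec_eq_zero_iff.mpr hdetM
  set wc : ℕ → Fin 3 → ℂ := fun k i => (w i).coeff k with hwc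
  have hrow : ∀ i, ∑ j, (C (Q₀ i j) + X * C (Q₁ i j)) * w j = 0 := by
    intro i
    have h := congrFun hww i
    simpa [Matrix.mulVec, dotProduct, hMij] using h
  have rel0 : Q₀ *ᵥ wc 0 = 0 := by
    funext i
    have h := congrArg (fun p => Polynomial.coeff p 0) (hrow i)
    simp only [Polynomial.finset_sum_coeff, add_mul, mul_assoc, Polynomial.coeff_add,
      Polynomial.coeff_C_mul, Polynomial.mul_coeff_zero, Polynomial.coeff_X_zero, zero_mul,
      add_zero, Polynomial.coeff_zero] at h
    simpa [Matrix.mulVec, dotProduct, hwc] using h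
  have relk : ∀ k, Q₀ *ᵥ wc (k+1) + Q₁ *ᵥ wc k = 0 := by
    intro k
    funext i
    have h := congrArg (fun p => Polynomial.coeff p (k+1)) (hrow i)
    simp only [Polynomial.finset_sum_coeff, add_mul, mul_assoc, Polynomial.coeff_add,
      Polynomial.coeff_C_mul, Polynomial.coeff_X_mul, Polynomial.coeff_zero] at h
    rw [Finset.sum_add_distrib] at h
    simpa [Matrix.mulVec, dotProduct, hwc, Pi.add_apply] using h
  have hA0 : ∀ j, wc j ⬝ᵥ Q₀ *ᵥ wc 0 = 0 := fun j => by
    rw [rel0, dotProduct_zero]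
  have hAB : ∀ j k, wc j ⬝ᵥ Q₀ *ᵥ wc (k+1) = -(wc j ⬝ᵥ Q₁ *ᵥ wc k) := by
    intro j k
    have h := congrArg (fun u => wc j ⬝ᵥ u) (relk k)
    simp only [dotProduct_add, dotProduct_zero] at h
    linear_combination h
  have hB : ∀ j k, wc j ⬝ᵥ Q₁ *ᵥ wc k = 0 := by
    intro j
    induction j with
    | zero =>
      intro k
      have h1 := hAB 0 k
      rw [aux_symm hQ0T (wc 0) (wc (k+1)), hA0 (k+1)] at h1
      linear_combination h1
    | succ j ih =>
      intro k
      have h1 := hAB (j+1) k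
      have h2 := hAB (k+1) j
      rw [aux_symm hQ0T (wc (j+1)) (wc (k+1))] at h1
      rw [aux_symm hQ1T (wc (k+1)) (wc j)] at h2
      rw [ih (k+1)] at h2
      -- h2 : wc (k+1) ⬝ᵥ Q₀ *ᵥ wc (j+1) = -0  ... combine
      rw [h2] at h1
      linear_combination h1
  have hA : ∀ j k, wc j ⬝ᵥ Q₀ *ᵥ wc k = 0 := by
    intro j k
    cases k with
    | zero => exact hA0 j
    | succ k => rw [hAB j k, hB j k, neg_zero]
  by_cases hcr : ∀ j k : ℕ, crossProduct (wc j) (wc k) = 0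
  · left
    obtain ⟨i₁, hi₁⟩ := Function.ne_iff.mp hw0
    obtain ⟨k₀, hk₀⟩ : ∃ k, (w i₁).coeff k ≠ 0 := by
      by_contra hcon
      push_neg at hcon
      exact hi₁ (Polynomial.ext fun k => by simp [hcon k])
    set u : Fin 3 → ℂ := wc k₀ with hu
    have hune : u ≠ 0 := fun hz => hk₀ (by simpa [hwc] using congrFun hz i₁)
    have hdep : ∀ k, ∃ c : ℂ, wc k = c • u := fun k => aux_dep hune (hcr k₀ k)
    choose cf hcf using hdep
    have hck₀ : cf k₀ ≠ 0 := by
      intro hzero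
      have h := hcf k₀
      rw [hzero, zero_smul, ← hu] at h
      exact hune h
    have hex : ∃ k, cf k ≠ 0 := ⟨k₀, hck₀⟩
    have hcn : cf (Nat.find hex) ≠ 0 := Nat.find_spec hex
    have hQ0u : Q₀ *ᵥ u = 0 := by
      rcases hne2 : Nat.find hex with _ | j
      · have h0 := rel0
        rw [hcf 0, Matrix.mulVec_smul] at h0
        rw [hne2] at hcn
        exact (smul_eq_zero.mp h0).resolve_left hcn
      · have hj : cf j = 0 := by
          have := Nat.find_min hex (by omega : j < Nat.find hex)
          simpa using this
        have h1 := relk j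
        rw [hcf (j+1), hcf j, hj, zero_smul, Matrix.mulVec_smul, Matrix.mulVec_zero,
          add_zero] at h1
        rw [hne2] at hcn
        exact (smul_eq_zero.mp h1).resolve_left hcn
    have hQ1u : Q₁ *ᵥ u = 0 := by
      have h1 := relk (Nat.find hex)
      rw [hcf (Nat.find hex + 1), hcf (Nat.find hex), Matrix.mulVec_smul, Matrix.mulVec_smul,
        hQ0u, smul_zero, zero_add] at h1
      exact (smul_eq_zero.mp h1).resolve_left hcn
    exact ⟨u, hune, hQ0u, hQ1u⟩
  · right
    push_neg at hcr
    obtain ⟨j, k, hjk⟩ := hcr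
    refine ⟨crossProduct (wc j) (wc k), hjk, fun l m => ?_⟩
    have hQT : (l • Q₀ + m • Q₁)ᵀ = l • Q₀ + m • Q₁ := by
      rw [Matrix.transpose_add, Matrix.transpose_smul, Matrix.transpose_smul, hQ0T, hQ1T]
    have hpair : ∀ a b : ℕ, wc a ⬝ᵥ (l • Q₀ + m • Q₁) *ᵥ wc b = 0 := by
      intro a b
      rw [Matrix.add_mulVec, dotProduct_add, Matrix.smul_mulVec,
        Matrix.smul_mulVec, dotProduct_smul, dotProduct_smul,
        hA a b, hB a b, smul_zero, smul_zero, add_zero]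
    exact aux_factor _ hQT (wc j) (wc k) hjk (hpair j j) (hpair j k) (hpair k k)
end
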